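/- The function h(γ) = (2γ²+4γ+1)/(2(1+γ)(γ²+2γ)) + 1 − (γ²+2γ)/ln(1+γ) is strictly decreasing on (0, ∞). -/

import Mathlib

/-!
Substituting `s = 1 + γ`, the rational part of `h` has the partial fraction decomposition
`1 / (2 (1 + γ)) + 1 / (4 γ) + 1 / (4 (γ + 2))`, a sum of decreasing terms. The subtracted
term equals `2 (x - 1) / log x` with `x = (1 + γ)²`, and `x ↦ log x / (x - 1)` is the slope of
the secant of the strictly concave `log` through `1`, hence strictly decreasing on `(1, ∞)`.
-/

/-- h(γ) = (2γ²+4γ+1)/(2(1+γ)(γ²+2γ)) + 1 − (γ²+2γ)/ln(1+γ). -/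
noncomputable def hfun (γ : ℝ) : ℝ :=
  (2 * γ ^ 2 + 4 * γ + 1) / (2 * (1 + γ) * (γ ^ 2 + 2 * γ)) + 1 -
    (γ ^ 2 + 2 * γ) / Real.log (1 + γ)

open Real Set

lemma strictAntiOn_log_div_sub_one : StrictAntiOn (fun x : ℝ => log x / (x - 1)) (Ioi 1) := by
  intro x hx y hy hxy
  have hpos : (1 : ℝ) ∈ Ioi 0 := mem_Ioi.2 zero_lt_one
  have hx0 : x ∈ Ioi (0 : ℝ) := mem_Ioi.2 (zero_lt_one.trans hx)
  have hy0 : y ∈ Ioi (0 : ℝ) := mem_Ioi.2 (zero_lt_one.trans hy)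
  simpa only [log_one, sub_zero] using
    strictConcaveOn_log_Ioi.secant_strict_mono hpos hx0 hy0 (ne_of_gt hx) (ne_of_gt hy) hxy

lemma strictMonoOn_sub_one_div_log : StrictMonoOn (fun x : ℝ => (x - 1) / log x) (Ioi 1) := by
  intro x hx y hy hxy
  have hslope_pos : ∀ z ∈ Ioi (1 : ℝ), 0 < log z / (z - 1) := fun z hz =>
    div_pos (log_pos hz) (sub_pos.2 hz)
  simp only [← inv_div (log _)]
  exact inv_strictAntiOn (hslope_pos y hy) (hslope_pos x hx)
    (strictAntiOn_log_div_sub_one hx hy hxy)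

lemma strictMonoOn_sq_add_two_mul_div_log_one_add :
    StrictMonoOn (fun t : ℝ => (t ^ 2 + 2 * t) / log (1 + t)) (Ioi 0) := by
  have hrewrite : ∀ t : ℝ,
      (t ^ 2 + 2 * t) / log (1 + t) = 2 * (((1 + t) ^ 2 - 1) / log ((1 + t) ^ 2)) := by
    intro t
    rw [log_pow]
    push_cast
    field_simp
    ring
  intro x hx y hy hxy
  have hsq : ∀ t ∈ Ioi (0 : ℝ), (1 + t) ^ 2 ∈ Ioi (1 : ℝ) := fun t ht =>
    mem_Ioi.2 (one_lt_pow₀ (lt_add_of_pos_right 1 ht) two_ne_zero)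
  have hsq_lt : (1 + x) ^ 2 < (1 + y) ^ 2 := by
    have := mem_Ioi.1 hx
    gcongr
  simp only [hrewrite x, hrewrite y]
  gcongr 2 * ?_
  exact strictMonoOn_sub_one_div_log (hsq x hx) (hsq y hy) hsq_lt

lemma rational_part_eq {γ : ℝ} (hγ : 0 < γ) :
    (2 * γ ^ 2 + 4 * γ + 1) / (2 * (1 + γ) * (γ ^ 2 + 2 * γ)) =
      1 / (2 * (1 + γ)) + 1 / (4 * γ) + 1 / (4 * (γ + 2)) := by
  have h2 : 0 < γ + 2 := by linarith
  rw [show γ ^ 2 + 2 * γ = γ * (γ + 2) by ring]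
  field_simp
  ring

lemma strictAntiOn_rational_part :
    StrictAntiOn (fun γ : ℝ => (2 * γ ^ 2 + 4 * γ + 1) / (2 * (1 + γ) * (γ ^ 2 + 2 * γ)))
      (Ioi 0) := by
  intro x hx y hy hxy
  have hx : 0 < x := hx
  simp only [rational_part_eq hx, rational_part_eq (hx.trans hxy)]
  gcongr

/-- h is strictly decreasing on (0, ∞). -/
theorem stmt_5 : StrictAntiOn hfun (Set.Ioi (0 : ℝ)) := by
  intro x hx y hy hxy
  have hrat := strictAntiOn_rational_part hx hy hxy
  have hlog := strictMonoOn_sq_add_two_mul_div_log_one_add hx hy hxy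
  simp only [hfun] at hrat hlog ⊢
  linarith
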